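/- arXiv:1104.2097 — 4 statements merged into one kernel-verified Lean document; each statement's English description precedes it below -/
import Mathlib

section
/- Assume CH, and let ≺ be a well-ordering of [0,1] in order type ω₁ (so every proper initial segment is countable). Let μ be Lebesgue measure on [0,1] and 𝒞 the class of all initial segments I_y. Then for every n and every finite set σ = {x₁,…,xₙ} ⊆ [0,1] that is not cofinal in ≺, there exists C ∈ 𝒞 with σ ⊆ C and μ(C) = 0, while the empirical measure of C on σ equals 1. Consequently, for any ε < 1, sup_{C ∈ 𝒞} |μₙ(C) − μ(C)| ≥ 1 for every sample, so 𝒞 is not a uniform Glivenko–Cantelli class with respect to Lebesgue measure. -/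
/-!
Each initial segment `{x | r x y}` is countable, hence Lebesgue-null, yet it contains every sample
point below `y`, so on such a sample its empirical measure is `1` against true measure `0`. Since
`[0,1]` is uncountable while the predecessors of finitely many points form a countable set, every
finite sample has a strict upper bound; so the deviation is at least `1` on every sample, and
no sample size makes it small with probability close to `1`.
-/

open MeasureTheory Set

/-- Empirical measure of the set `C` on a sample `σ` of size `n`. -/
noncomputable def empMeas {Ω : Type*} (n : ℕ) (σ : Fin n → Ω) (C : Set Ω) : ℝ :=
  (Nat.card {i : Fin n // σ i ∈ C} : ℝ) / n

/-- `n₀` is a uniform Glivenko–Cantelli sample-complexity bound for `𝒞`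
at accuracy `ε` and confidence `δ`, with respect to the family `P` of measures
(outer probabilities are used). -/
def GoodBound {Ω : Type*} [MeasurableSpace Ω] (P : Set (Measure Ω)) (ε δ : ℝ)
    (𝒞 : Set (Set Ω)) (n₀ : ℕ) : Prop :=
  ∀ n : ℕ, n₀ ≤ n → ∀ μ ∈ P,
    (Measure.pi fun _ : Fin n => μ)
      {σ : Fin n → Ω | ε ≤ ⨆ C ∈ 𝒞, |empMeas n σ C - (μ C).toReal|} ≤ ENNReal.ofReal δ

/-- `𝒞` is a uniform Glivenko–Cantelli class with respect to `P`. -/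
def IsUGC {Ω : Type*} [MeasurableSpace Ω] (𝒞 : Set (Set Ω)) (P : Set (Measure Ω)) : Prop :=
  ∀ ε : ℝ, 0 < ε → ∀ δ : ℝ, 0 < δ → ∃ n₀ : ℕ, GoodBound P ε δ 𝒞 n₀

theorem exists_forall_rel_of_countable_setOf_rel {α : Type*} {r : α → α → Prop}
    [Std.Trichotomous r] (hα : ¬ Countable α) (hcount : ∀ y, {x | r x y}.Countable)
    {ι : Type*} [Countable ι] (f : ι → α) : ∃ y, ∀ i, r (f i) y := by
  have hS : ((⋃ i, {x | r x (f i)}) ∪ range f).Countable :=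
    (countable_iUnion fun i => hcount (f i)).union (countable_range f)
  obtain ⟨y, hy⟩ : ∃ y, y ∉ (⋃ i, {x | r x (f i)}) ∪ range f := by
    by_contra! h
    exact hα (countable_univ_iff.1 (hS.mono fun y _ => h y))
  refine ⟨y, fun i => ?_⟩
  rcases trichotomous_of r y (f i) with hlt | heq | hgt
  · exact absurd (mem_union_left _ (mem_iUnion.2 ⟨i, hlt⟩)) hy
  · exact absurd (mem_union_right _ (mem_range.2 ⟨i, heq.symm⟩)) hy
  · exact hgt

theorem not_countable_Icc_zero_one : ¬ Countable (Icc (0:ℝ) 1) := by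
  simp [countable_coe_iff]

section empMeas

variable {Ω : Type*} {n : ℕ} (σ : Fin n → Ω) (C : Set Ω)

theorem empMeas_nonneg : 0 ≤ empMeas n σ C := by
  unfold empMeas
  positivity

theorem empMeas_le_one : empMeas n σ C ≤ 1 := by
  refine div_le_one_of_le₀ ?_ (Nat.cast_nonneg n)
  calc (Nat.card {i : Fin n // σ i ∈ C} : ℝ) ≤ Nat.card (Fin n) := by
        exact_mod_cast Nat.card_le_card_of_injective _ Subtype.val_injective
    _ = n := by simp

theorem empMeas_eq_one_of_forall_mem (hn : 0 < n) (hC : ∀ i, σ i ∈ C) :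
    empMeas n σ C = 1 := by
  simp [empMeas, hC, hn.ne']

variable [MeasurableSpace Ω] (μ : Measure Ω) [IsProbabilityMeasure μ]

theorem abs_empMeas_sub_le_one : |empMeas n σ C - (μ C).toReal| ≤ 1 :=
  abs_sub_le_of_nonneg_of_le (empMeas_nonneg σ C) (empMeas_le_one σ C)
    ENNReal.toReal_nonneg measureReal_le_one

theorem abs_empMeas_sub_le_iSup {𝒞 : Set (Set Ω)} (hC : C ∈ 𝒞) :
    |empMeas n σ C - (μ C).toReal| ≤ ⨆ C ∈ 𝒞, |empMeas n σ C - (μ C).toReal| := by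
  have hbdd : BddAbove (⋃ D, range fun (_ : D ∈ 𝒞) => |empMeas n σ D - (μ D).toReal|) := by
    refine ⟨1, ?_⟩
    rintro _ ⟨_, ⟨D, rfl⟩, _, rfl⟩
    exact abs_empMeas_sub_le_one σ D μ
  exact le_ciSup₂ hbdd C hC

end empMeas

theorem not_isUGC_of_forall_le_iSup {Ω : Type*} [MeasurableSpace Ω] (μ : Measure Ω)
    [IsProbabilityMeasure μ] {𝒞 : Set (Set Ω)} {ε : ℝ} (hε : 0 < ε)
    (h : ∀ n, 0 < n → ∀ σ : Fin n → Ω, ε ≤ ⨆ C ∈ 𝒞, |empMeas n σ C - (μ C).toReal|) :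
    ¬ IsUGC 𝒞 {μ} := by
  intro hUGC
  obtain ⟨n₀, hn₀⟩ := hUGC ε hε (1 / 2) one_half_pos
  have hbad := hn₀ (n₀ + 1) n₀.le_succ μ rfl
  have hall : {σ : Fin (n₀ + 1) → Ω | ε ≤ ⨆ C ∈ 𝒞, |empMeas (n₀ + 1) σ C - (μ C).toReal|} =
      univ := eq_univ_of_forall (h (n₀ + 1) n₀.succ_pos)
  rw [hall, measure_univ] at hbad
  norm_num at hbad

theorem dudley_durst_example_general
    (r : ↥(Set.Icc (0:ℝ) 1) → ↥(Set.Icc (0:ℝ) 1) → Prop)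
    (hwo : IsWellOrder ↥(Set.Icc (0:ℝ) 1) r)
    (hcount : ∀ y, {x | r x y}.Countable)
    (𝒞 : Set (Set ↥(Set.Icc (0:ℝ) 1)))
    (h𝒞 : 𝒞 = {C | ∃ y, C = {x | r x y}}) :
    (∀ (n : ℕ) (σ : Fin n → ↥(Set.Icc (0:ℝ) 1)), (∃ y, ∀ i, r (σ i) y) →
      ∃ C ∈ 𝒞, (∀ i, σ i ∈ C) ∧ volume C = 0 ∧ (0 < n → empMeas n σ C = 1)) ∧
    (∀ (n : ℕ) (σ : Fin n → ↥(Set.Icc (0:ℝ) 1)), 0 < n → (∃ y, ∀ i, r (σ i) y) →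
      1 ≤ ⨆ C ∈ 𝒞, |empMeas n σ C - (volume C).toReal|) ∧
    ¬ IsUGC 𝒞 {volume} := by
  have null_segment : ∀ (n : ℕ) (σ : Fin n → ↥(Set.Icc (0:ℝ) 1)), (∃ y, ∀ i, r (σ i) y) →
      ∃ C ∈ 𝒞, (∀ i, σ i ∈ C) ∧ volume C = 0 ∧ (0 < n → empMeas n σ C = 1) := by
    rintro n σ ⟨y, hy⟩
    exact ⟨{x | r x y}, h𝒞 ▸ ⟨y, rfl⟩, hy, (hcount y).measure_zero volume,
      fun hn => empMeas_eq_one_of_forall_mem σ _ hn hy⟩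
  have deviation_ge_one : ∀ (n : ℕ) (σ : Fin n → ↥(Set.Icc (0:ℝ) 1)), 0 < n →
      (∃ y, ∀ i, r (σ i) y) → 1 ≤ ⨆ C ∈ 𝒞, |empMeas n σ C - (volume C).toReal| := by
    intro n σ hn hσ
    obtain ⟨C, hC𝒞, -, hnull, hemp⟩ := null_segment n σ hσ
    simpa [hemp hn, hnull] using abs_empMeas_sub_le_iSup σ C volume hC𝒞
  refine ⟨null_segment, deviation_ge_one, not_isUGC_of_forall_le_iSup volume one_pos
    fun n hn σ => deviation_ge_one n σ hn ?_⟩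
  exact exists_forall_rel_of_countable_setOf_rel not_countable_Icc_zero_one hcount σ

/-- the Dudley–Durst example.  Under CH, for a well-ordering of `[0,1]`
with countable proper initial segments, the class of initial segments has the
following properties: every non-cofinal sample is contained in a null concept of
empirical measure one; hence the sup-deviation is ≥ 1 on every such sample, and the
class is not uniform Glivenko–Cantelli with respect to Lebesgue measure. -/
theorem dudley_durst_example
    (hCH : Cardinal.continuum = Cardinal.aleph 1)
    (r : ↥(Set.Icc (0:ℝ) 1) → ↥(Set.Icc (0:ℝ) 1) → Prop)
    (hwo : IsWellOrder ↥(Set.Icc (0:ℝ) 1) r)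
    (hcount : ∀ y, {x | r x y}.Countable)
    (𝒞 : Set (Set ↥(Set.Icc (0:ℝ) 1)))
    (h𝒞 : 𝒞 = {C | ∃ y, C = {x | r x y}}) :
    (∀ (n : ℕ) (σ : Fin n → ↥(Set.Icc (0:ℝ) 1)), (∃ y, ∀ i, r (σ i) y) →
      ∃ C ∈ 𝒞, (∀ i, σ i ∈ C) ∧ volume C = 0 ∧ (0 < n → empMeas n σ C = 1)) ∧
    (∀ (n : ℕ) (σ : Fin n → ↥(Set.Icc (0:ℝ) 1)), 0 < n → (∃ y, ∀ i, r (σ i) y) →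
      1 ≤ ⨆ C ∈ 𝒞, |empMeas n σ C - (volume C).toReal|) ∧
    ¬ IsUGC 𝒞 {volume} :=
  dudley_durst_example_general r hwo hcount 𝒞 h𝒞
end

section
/- Assume Martin's Axiom. The union of strictly fewer than 2^ℵ₀ Lebesgue null subsets of [0,1] is Lebesgue null. -/
open MeasureTheory Set Cardinal

/-- Martin's Axiom: no nonempty compact Hausdorff space with the countable chain
condition is the union of strictly fewer than continuum nowhere dense subsets. -/
def MartinsAxiom : Prop :=
  ∀ (X : Type) [TopologicalSpace X], Nonempty X → CompactSpace X → T2Space X →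
    (∀ s : Set (Set X), (∀ u ∈ s, IsOpen u) → s.PairwiseDisjoint id → s.Countable) →
    ∀ (ι : Type), Cardinal.mk ι < Cardinal.continuum → ∀ f : ι → Set X,
      (∀ i, IsNowhereDense (f i)) → (⋃ i, f i) ≠ Set.univ

/-!
Martin's Axiom is applied to the Stone space of the regular open algebra of the amoeba poset:
open sets of measure `< δ`, a stronger condition being a larger set. This poset has the countable
chain condition: code an amoeba `U` by `(V, n)`, where `V ⊆ U` is a finite union of basic open sets
with `μ (U \ V) < 1/n` and `μ U + 1/n < δ`; there are countably many codes, and two amoebas with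
the same code have union of measure `< δ`, so they are compatible. By outer regularity, the amoebas
covering a null set `A i` form a dense set. A point outside the fewer than `𝔠` nowhere dense sets
given by these dense sets yields a centred family of amoebas covering `⋃ i, A i`. Its union has
measure `≤ δ` by inner regularity, since each compact subset is covered by finitely many of them.
-/

section StoneSpace

variable (B : Type*) [BooleanAlgebra B]

def stoneSpace : Set (B → Bool) :=
  {f | f ⊤ = true ∧ (∀ a b, f (a ⊓ b) = (f a && f b)) ∧ ∀ a, f aᶜ = !f a}

variable {B}

theorem isClosed_stoneSpace : IsClosed (stoneSpace B) := by
  simp only [stoneSpace, ofPred_and, ofPred_forall]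
  refine (isClosed_eq (continuous_apply _) continuous_const).inter
    ((isClosed_iInter fun a => isClosed_iInter fun b => isClosed_eq (continuous_apply _) ?_).inter
      (isClosed_iInter fun a => isClosed_eq (continuous_apply _) ?_))
  all_goals fun_prop

instance : CompactSpace (stoneSpace B) :=
  isCompact_iff_compactSpace.mp isClosed_stoneSpace.isCompact

def stoneSet (b : B) : Set (stoneSpace B) := {x | x.1 b = true}

theorem isOpen_stoneSet (b : B) : IsOpen (stoneSet b) :=
  show IsOpen ((fun x : stoneSpace B => x.1 b) ⁻¹' {true}) from
    (isOpen_discrete _).preimage ((continuous_apply b).comp continuous_subtype_val)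

theorem stoneSet_top : stoneSet (⊤ : B) = Set.univ :=
  eq_univ_of_forall fun x => x.2.1

theorem stoneSet_inf (a b : B) : stoneSet (a ⊓ b) = stoneSet a ∩ stoneSet b := by
  ext x
  simp [stoneSet, x.2.2.1]

theorem mem_stoneSet_compl {a : B} {x : stoneSpace B} : x ∈ stoneSet aᶜ ↔ x.1 a = false := by
  simp [stoneSet, x.2.2.2]

theorem stoneSet_bot : stoneSet (⊥ : B) = ∅ := by
  ext x
  simpa [← compl_top, mem_stoneSet_compl] using x.2.1

theorem stoneSet_mono {a b : B} (h : a ≤ b) : stoneSet a ⊆ stoneSet b := by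
  rw [← inf_eq_left.2 h, stoneSet_inf]
  exact inter_subset_right

theorem stoneSet_finset_inf {ι : Type*} (s : Finset ι) (f : ι → B) :
    stoneSet (s.inf f) = ⋂ i ∈ s, stoneSet (f i) := by
  classical
  induction s using Finset.induction_on with
  | empty => simp [stoneSet_top]
  | insert i s _ ih => simp [stoneSet_inf, ih]

theorem stoneSet_nonempty {b : B} (hb : b ≠ ⊥) : (stoneSet b).Nonempty := by
  classical
  have hdisj :
      Disjoint (Order.PFilter.principal b : Set B) (Order.Ideal.principal (⊥ : B) : Set B) :=
    Set.disjoint_left.2 fun a haF haI => hb <| le_bot_iff.1 <|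
      (Order.PFilter.mem_principal.1 haF).trans (Order.Ideal.mem_principal.1 haI)
  obtain ⟨J, hJ, -, hbJ⟩ := DistribLattice.prime_ideal_of_disjoint_filter_ideal hdisj
  have hinf (a c : B) : a ⊓ c ∈ J ↔ a ∈ J ∨ c ∈ J :=
    ⟨hJ.mem_or_mem, fun h => h.elim (J.lower inf_le_left) (J.lower inf_le_right)⟩
  have hcompl (a : B) : aᶜ ∈ J ↔ a ∉ J :=
    ⟨fun h ha => hJ.top_notMem (sup_compl_eq_top (x := a) ▸ J.sup_mem ha h),
      hJ.compl_mem_of_notMem⟩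
  refine ⟨⟨fun a => decide (a ∉ J), by simpa using hJ.top_notMem, fun a c => ?_, fun a => ?_⟩, ?_⟩
  · simp [hinf, not_or]
  · simp [hcompl]
  · simpa [stoneSet] using hbJ.notMem_of_mem_left (Order.PFilter.mem_principal.2 le_rfl)

theorem mem_stoneSet_ite {x y : stoneSpace B} {a : B} :
    y ∈ stoneSet (if x.1 a then a else aᶜ) ↔ y.1 a = x.1 a := by
  cases x.1 a <;> simp [stoneSet, y.2.2.2]

theorem exists_stoneSet_subset {O : Set (stoneSpace B)} (hO : IsOpen O) {x : stoneSpace B}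
    (hx : x ∈ O) : ∃ b, x ∈ stoneSet b ∧ stoneSet b ⊆ O := by
  obtain ⟨O', hO', rfl⟩ := isOpen_induced_iff.mp hO
  obtain ⟨I, u, hu, hIu⟩ := isOpen_pi_iff.mp hO' x.1 hx
  refine ⟨I.inf fun a => if x.1 a then a else aᶜ, ?_, fun y hy => hIu fun a ha => ?_⟩
  · simp [stoneSet_finset_inf, mem_stoneSet_ite]
  · rw [stoneSet_finset_inf] at hy
    have := mem_iInter₂.1 hy a ha
    rw [mem_stoneSet_ite] at this
    simpa [this] using (hu a ha).2

end StoneSpace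

theorem Heyting.Regular.coe_finset_inf_toRegular {α ι : Type*} [HeytingAlgebra α]
    (s : Finset ι) (f : ι → α) :
    ((s.inf fun i => toRegular (f i) : Regular α) : α) = (s.inf f)ᶜᶜ := by
  classical
  induction s using Finset.induction_on with
  | empty => simp
  | insert i s _ ih =>
    rw [Finset.inf_insert, Finset.inf_insert, compl_compl_inf_distrib, ← ih, ← coe_toRegular]
    rfl

namespace Forcing

variable {P : Type*} [Preorder P]

def Compatible (p q : P) : Prop := ∃ r, r ≤ p ∧ r ≤ q

variable (P) in
def CountableChainCondition : Prop :=
  ∀ s : Set P, s.Pairwise (fun p q => ¬Compatible p q) → s.Countable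

def IsDense (D : Set P) : Prop := ∀ p, ∃ q ∈ D, q ≤ p

def IsCentered (G : Set P) : Prop := ∀ s ⊆ G, s.Finite → ∃ r, ∀ p ∈ s, r ≤ p

theorem CountableChainCondition.of_code {C : Type*} [Countable C] (c : P → C)
    (hc : ∀ p q, c p = c q → Compatible p q) : CountableChainCondition P := fun s hs =>
  (mapsTo_univ c s).countable_of_injOn
    (fun p hp q hq hpq => by_contra fun hne => hs hp hq hne (hc p q hpq)) countable_univ

def regularIic (p : P) : Heyting.Regular (LowerSet P) :=
  Heyting.Regular.toRegular (LowerSet.Iic p)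

theorem regularIic_mono : Monotone (regularIic (P := P)) := fun _ _ h =>
  Heyting.Regular.toRegular.monotone (LowerSet.Iic_le.2 h)

theorem regularIic_ne_bot (p : P) : regularIic p ≠ ⊥ := by
  intro h
  have h' : (LowerSet.Iic p)ᶜᶜ = ⊥ := by
    rw [← Heyting.Regular.coe_toRegular, ← Heyting.Regular.coe_bot]
    exact congrArg _ h
  exact LowerSet.bot_lt_Iic.ne' (le_bot_iff.1 (h' ▸ le_compl_compl))

theorem exists_regularIic_le {b : Heyting.Regular (LowerSet P)} (hb : b ≠ ⊥) :
    ∃ p, regularIic p ≤ b := by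
  obtain ⟨p, hp⟩ : ((b : LowerSet P) : Set P).Nonempty := by
    rw [nonempty_iff_ne_empty, Ne, LowerSet.coe_eq_empty, ← Heyting.Regular.coe_bot,
      Heyting.Regular.coe_inj]
    exact hb
  exact ⟨p, Heyting.Regular.gi.gc.l_le (LowerSet.Iic_le.2 hp)⟩

theorem exists_le_of_finset_inf_regularIic_ne_bot {s : Finset P}
    (hs : s.inf regularIic ≠ ⊥) : ∃ r, ∀ p ∈ s, r ≤ p := by
  obtain ⟨r, hr⟩ : ((s.inf LowerSet.Iic : LowerSet P) : Set P).Nonempty := by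
    rw [nonempty_iff_ne_empty, Ne, LowerSet.coe_eq_empty]
    intro h
    apply hs
    rw [← Heyting.Regular.coe_inj, show s.inf regularIic = s.inf fun p =>
      Heyting.Regular.toRegular (LowerSet.Iic p) from rfl,
      Heyting.Regular.coe_finset_inf_toRegular, h]
    simp
  exact ⟨r, fun p hp => LowerSet.Iic_le.1 (Finset.le_inf_iff.1 (LowerSet.Iic_le.2 hr) p hp)⟩

theorem stoneSet_regularIic_nonempty (p : P) : (stoneSet (regularIic p)).Nonempty :=
  stoneSet_nonempty (regularIic_ne_bot p)

theorem exists_stoneSet_regularIic_subset {O : Set (stoneSpace (Heyting.Regular (LowerSet P)))}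
    (hO : IsOpen O) (hne : O.Nonempty) : ∃ p, stoneSet (regularIic p) ⊆ O := by
  obtain ⟨x, hx⟩ := hne
  obtain ⟨b, hxb, hbO⟩ := exists_stoneSet_subset hO hx
  have hb : b ≠ ⊥ := by
    rintro rfl
    rwa [stoneSet_bot] at hxb
  obtain ⟨p, hp⟩ := exists_regularIic_le hb
  exact ⟨p, (stoneSet_mono hp).trans hbO⟩

theorem CountableChainCondition.countable_of_pairwiseDisjoint_isOpen
    (hP : CountableChainCondition P) (s : Set (Set (stoneSpace (Heyting.Regular (LowerSet P)))))
    (hs : ∀ u ∈ s, IsOpen u) (hdisj : s.PairwiseDisjoint id) : s.Countable := by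
  have key (u : ↥(s \ {∅})) : ∃ p, stoneSet (regularIic p) ⊆ u.1 :=
    exists_stoneSet_regularIic_subset (hs u u.2.1) (nonempty_iff_ne_empty.2 u.2.2)
  choose f hf using key
  have heq (u v : ↥(s \ {∅})) (h : Compatible (f u) (f v)) : u = v := by
    obtain ⟨r, hru, hrv⟩ := h
    obtain ⟨x, hx⟩ := stoneSet_regularIic_nonempty r
    refine Subtype.ext <| hdisj.elim u.2.1 v.2.1 (not_disjoint_iff.2 ⟨x, ?_, ?_⟩)
    · exact hf u (stoneSet_mono (regularIic_mono hru) hx)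
    · exact hf v (stoneSet_mono (regularIic_mono hrv) hx)
  have hrange : (range f).Countable := by
    refine hP _ ?_
    rintro _ ⟨u, rfl⟩ _ ⟨v, rfl⟩ hne hc
    exact hne (congrArg f (heq u v hc))
  have : Countable ↥(s \ {∅}) := by
    have := hrange.to_subtype
    exact Function.Injective.countable (f := rangeFactorization f)
      fun u v h => heq u v ⟨f u, le_rfl, (congrArg Subtype.val h).le⟩
  exact (countable_coe_iff.1 this).of_sdiff (countable_singleton ∅)

theorem isNowhereDense_compl_iUnion_stoneSet {D : Set P} (hD : IsDense D) :
    IsNowhereDense (⋃ p ∈ D, stoneSet (regularIic p))ᶜ := by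
  refine (isClosed_isNowhereDense_iff_compl.2 ⟨?_, ?_⟩).2 <;> rw [compl_compl]
  · exact isOpen_biUnion fun p _ => isOpen_stoneSet _
  · refine dense_iff_inter_open.2 fun O hO hne => ?_
    obtain ⟨p, hpO⟩ := exists_stoneSet_regularIic_subset hO hne
    obtain ⟨q, hqD, hqp⟩ := hD p
    obtain ⟨x, hx⟩ := stoneSet_regularIic_nonempty q
    exact ⟨x, hpO (stoneSet_mono (regularIic_mono hqp) hx), mem_biUnion hqD hx⟩

theorem isCentered_setOf_mem_stoneSet (x : stoneSpace (Heyting.Regular (LowerSet P))) :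
    IsCentered {p | x ∈ stoneSet (regularIic p)} := by
  intro s hs hfin
  have hx : x ∈ stoneSet (hfin.toFinset.inf regularIic) := by
    rw [stoneSet_finset_inf]
    exact mem_iInter₂.2 fun p hp => hs (hfin.mem_toFinset.1 hp)
  obtain ⟨r, hr⟩ := exists_le_of_finset_inf_regularIic_ne_bot (s := hfin.toFinset) fun h => by
    rwa [h, stoneSet_bot] at hx
  exact ⟨r, fun p hp => hr p (hfin.mem_toFinset.2 hp)⟩

end Forcing

open Forcing

theorem MartinsAxiom.exists_isCentered_forall_inter_nonempty (hMA : MartinsAxiom) {P : Type}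
    [Preorder P] [Nonempty P] (hP : CountableChainCondition P) {ι : Type}
    (hι : Cardinal.mk ι < Cardinal.continuum) (D : ι → Set P) (hD : ∀ i, IsDense (D i)) :
    ∃ G : Set P, IsCentered G ∧ ∀ i, (G ∩ D i).Nonempty := by
  obtain ⟨x, hx⟩ := ne_univ_iff_exists_notMem _ |>.1 <|
    hMA _ ⟨(stoneSet_regularIic_nonempty (Classical.arbitrary P)).some⟩ inferInstance
      inferInstance hP.countable_of_pairwiseDisjoint_isOpen ι hι _
      fun i => isNowhereDense_compl_iUnion_stoneSet (hD i)
  refine ⟨_, isCentered_setOf_mem_stoneSet x, fun i => ?_⟩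
  obtain ⟨p, hpD, hp⟩ : ∃ p ∈ D i, x ∈ stoneSet (regularIic p) := by
    simpa using hx ∘ mem_iUnion_of_mem i
  exact ⟨p, hp, hpD⟩

open scoped ENNReal
open TopologicalSpace

section MeasureApproximation

variable {X : Type*} [TopologicalSpace X] [MeasurableSpace X] [OpensMeasurableSpace X]
  {μ : Measure X}

theorem measure_biUnion_le_of_forall_finite [μ.InnerRegular] {J : Type*} {G : Set J}
    {U : J → Set X} (hU : ∀ j ∈ G, IsOpen (U j)) {c : ℝ≥0∞}
    (h : ∀ s ⊆ G, s.Finite → μ (⋃ j ∈ s, U j) ≤ c) : μ (⋃ j ∈ G, U j) ≤ c := by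
  refine le_of_forall_lt fun r hr => ?_
  obtain ⟨K, hKU, hK, hrK⟩ := (isOpen_biUnion hU).measurableSet.exists_lt_isCompact hr
  obtain ⟨s, hsG, hs, hKs⟩ := hK.elim_finite_subcover_image hU hKU
  exact hrK.trans_le ((measure_mono hKs).trans (h s hsG hs))

theorem IsOpen.exists_finite_subset_basis_measure_sdiff_lt [T2Space X]
    [μ.InnerRegularCompactLTTop] {B : Set (Set X)} (hB : IsTopologicalBasis B) {U : Set X}
    (hU : IsOpen U) (hμU : μ U ≠ ∞) {δ : ℝ≥0∞} (hδ : δ ≠ 0) :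
    ∃ t ⊆ B, t.Finite ∧ ⋃₀ t ⊆ U ∧ μ (U \ ⋃₀ t) < δ := by
  obtain ⟨K, hKU, hK, hUK⟩ := hU.measurableSet.exists_isCompact_sdiff_lt hμU hδ
  have hcover : K ⊆ ⋃ v ∈ {v ∈ B | v ⊆ U}, v := by
    rwa [← sUnion_eq_biUnion, ← hB.open_eq_sUnion' hU]
  obtain ⟨t, htB, ht, hKt⟩ := hK.elim_finite_subcover_image (fun v hv => hB.isOpen hv.1) hcover
  refine ⟨t, fun v hv => (htB hv).1, ht, sUnion_subset fun v hv => (htB hv).2, ?_⟩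
  rw [sUnion_eq_biUnion]
  exact (measure_mono (sdiff_subset_sdiff_right hKt)).trans_lt hUK

end MeasureApproximation

variable {X : Type*} [TopologicalSpace X] [MeasurableSpace X]

def Amoeba (μ : Measure X) (ε : ℝ≥0∞) : Type _ := {U : Set X // IsOpen U ∧ μ U < ε}

namespace Amoeba

variable {μ : Measure X} {ε : ℝ≥0∞}

/-- Forcing convention: a stronger condition is a larger open set. -/
instance : PartialOrder (Amoeba μ ε) :=
  PartialOrder.lift (fun p => OrderDual.toDual p.1) fun _ _ h => Subtype.ext h

theorem nonempty (hε : ε ≠ 0) : Nonempty (Amoeba μ ε) :=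
  ⟨⟨∅, isOpen_empty, by simpa [pos_iff_ne_zero]⟩⟩

theorem compatible_of_measure_union_lt {p q : Amoeba μ ε} (h : μ (p.1 ∪ q.1) < ε) :
    Compatible p q :=
  ⟨⟨p.1 ∪ q.1, p.2.1.union q.2.1, h⟩, subset_union_left, subset_union_right⟩

theorem isDense_setOf_subset [μ.OuterRegular] {N : Set X} (hN : μ N = 0) :
    IsDense {q : Amoeba μ ε | N ⊆ q.1} := by
  intro p
  obtain ⟨V, hNV, hV, hμV⟩ := N.exists_isOpen_lt_of_lt (ε - μ p.1) (hN ▸ tsub_pos_of_lt p.2.2)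
  refine ⟨⟨p.1 ∪ V, p.2.1.union hV, ?_⟩, hNV.trans subset_union_right, subset_union_left⟩
  calc μ (p.1 ∪ V) ≤ μ p.1 + μ V := measure_union_le _ _
    _ < μ p.1 + (ε - μ p.1) := ENNReal.add_lt_add_left p.2.2.ne_top hμV
    _ = ε := add_tsub_cancel_of_le p.2.2.le

theorem compatible_of_measure_sdiff_lt {p q : Amoeba μ ε} {V : Set X} {δ : ℝ≥0∞}
    (hVp : V ⊆ p.1) (hp : μ p.1 + δ < ε) (hq : μ (q.1 \ V) < δ) : Compatible p q := by
  refine compatible_of_measure_union_lt ?_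
  calc μ (p.1 ∪ q.1) ≤ μ (p.1 ∪ q.1 \ V) := by
        rw [← union_sdiff_self]
        exact measure_mono (union_subset_union_right _ (sdiff_subset_sdiff_right hVp))
    _ ≤ μ p.1 + μ (q.1 \ V) := measure_union_le _ _
    _ < μ p.1 + δ := ENNReal.add_lt_add_left p.2.2.ne_top hq
    _ < ε := hp

theorem countableChainCondition [OpensMeasurableSpace X] [SecondCountableTopology X] [T2Space X]
    [μ.InnerRegularCompactLTTop] : CountableChainCondition (Amoeba μ ε) := by
  let 𝒱 : Set (Set X) := sUnion '' {t | t.Finite ∧ t ⊆ countableBasis X}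
  have h𝒱 : 𝒱.Countable := (countable_ofPred_finite_subset (countable_countableBasis X)).image _
  have code (p : Amoeba μ ε) : ∃ V ∈ 𝒱, ∃ n : ℕ, V ⊆ p.1 ∧ μ (p.1 \ V) < (n : ℝ≥0∞)⁻¹ ∧
      μ p.1 + (n : ℝ≥0∞)⁻¹ < ε := by
    obtain ⟨r, hr, hpr⟩ := ENNReal.lt_iff_exists_add_pos_lt.1 p.2.2
    obtain ⟨n, hn⟩ := ENNReal.exists_inv_nat_lt (ENNReal.coe_ne_zero.2 hr.ne')
    obtain ⟨t, htB, ht, htp, hμt⟩ := p.2.1.exists_finite_subset_basis_measure_sdiff_lt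
      (isBasis_countableBasis X) p.2.2.ne_top (ENNReal.inv_ne_zero.2 (ENNReal.natCast_ne_top n))
    exact ⟨_, ⟨t, ⟨ht, htB⟩, rfl⟩, n, htp, hμt,
      (ENNReal.add_lt_add_left p.2.2.ne_top hn).trans hpr⟩
  choose V hV n hn using code
  have := h𝒱.to_subtype
  refine CountableChainCondition.of_code (fun p => ((⟨V p, hV p⟩ : 𝒱), n p)) fun p q hpq => ?_
  simp only [Prod.mk.injEq, Subtype.mk.injEq] at hpq
  exact compatible_of_measure_sdiff_lt (hn p).1 (hn p).2.2 (hpq.1 ▸ hpq.2 ▸ (hn q).2.1)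

theorem measure_biUnion_le_of_isCentered [OpensMeasurableSpace X] [μ.InnerRegular]
    {G : Set (Amoeba μ ε)} (hG : IsCentered G) : μ (⋃ p ∈ G, p.1) ≤ ε := by
  refine measure_biUnion_le_of_forall_finite (fun p _ => p.2.1) fun s hsG hs => ?_
  obtain ⟨r, hr⟩ := hG s hsG hs
  exact (measure_mono (iUnion₂_subset fun p hp => hr p hp)).trans r.2.2.le

end Amoeba

theorem union_lt_continuum_null_sets_null_general (hMA : MartinsAxiom)
    (ι : Type) (hι : Cardinal.mk ι < Cardinal.continuum)
    (A : ι → Set ℝ)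
    (hnull : ∀ i, volume (A i) = 0) :
    volume (⋃ i, A i) = 0 := by
  refine le_antisymm (ENNReal.le_of_forall_pos_le_add fun δ hδ _ => ?_) zero_le
  rw [zero_add]
  have := Amoeba.nonempty (μ := (volume : Measure ℝ)) (ENNReal.coe_ne_zero.2 hδ.ne')
  obtain ⟨G, hG, hGA⟩ := hMA.exists_isCentered_forall_inter_nonempty
    Amoeba.countableChainCondition hι (fun i => {p : Amoeba volume δ | A i ⊆ p.1})
    fun i => Amoeba.isDense_setOf_subset (hnull i)
  calc volume (⋃ i, A i) ≤ volume (⋃ p ∈ G, p.1) := by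
        refine measure_mono (iUnion_subset fun i => ?_)
        obtain ⟨p, hpG, hp⟩ := hGA i
        exact hp.trans (subset_biUnion_of_mem hpG)
    _ ≤ δ := Amoeba.measure_biUnion_le_of_isCentered hG

/-- under MA, the union of strictly fewer than continuum Lebesgue null
subsets of `[0,1]` is Lebesgue null. -/
theorem union_lt_continuum_null_sets_null (hMA : MartinsAxiom)
    (ι : Type) (hι : Cardinal.mk ι < Cardinal.continuum)
    (A : ι → Set ℝ) (hsub : ∀ i, A i ⊆ Set.Icc (0:ℝ) 1)
    (hnull : ∀ i, volume (A i) = 0) :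
    volume (⋃ i, A i) = 0 :=
  union_lt_continuum_null_sets_null_general hMA ι hι A hnull
end

section
/- Assume CH. Let ≺ be a well-ordering of a standard Borel space Ω of order type ω₁ with all proper initial segments countable, let 𝒞 = {I_y : y ∈ Ω} ∪ {Ω}, and let ℒ₁ be the learning rule that, with respect to the well-ordering of 𝒞 placing Ω first and then the I_y in ≺-order, returns the least concept consistent with the labelled sample. Then for every C ∈ 𝒞 and n ∈ ℕ, the class ℒ₁^C = {ℒ₁(σ, C ∩ σ) : σ ∈ Ωⁿ, n ∈ ℕ} is countable. -/
/-!
The rule never returns a concept that comes after the target `C` in the modified ordering,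
since `C` itself is consistent with its own labels. So `ℒ₁^C` lies in the initial segment of
`𝒞` ending at `C`: for `C = Ω` this is `{Ω}`, and for `C = I_y` it consists of `Ω`, `I_y` and
the segments `I_x` with `x ≺ y`, of which there are countably many.
-/

open Set

section ModifiedOrdering

variable {Ω : Type} {r : Ω → Ω → Prop} {𝒞 : Set (Set Ω)} {r₁ : Set Ω → Set Ω → Prop}

lemma setOf_rel_segment_subset (h𝒞 : 𝒞 = {C | ∃ y : Ω, C = {x | r x y}} ∪ {univ})
    (hr₁_seg : ∀ y x : Ω, r₁ {z | r z y} {z | r z x} → r y x ∨ {z | r z y} = {z | r z x})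
    (y : Ω) :
    {D ∈ 𝒞 | r₁ D {z | r z y}} ⊆
      insert univ (insert {z | r z y} ((fun x => {z | r z x}) '' {x | r x y})) := by
  rintro D ⟨hD, h⟩
  rw [h𝒞] at hD
  rcases hD with ⟨x, rfl⟩ | rfl
  · rcases hr₁_seg x y h with hxy | heq
    · exact mem_insert_of_mem _ (mem_insert_of_mem _ ⟨x, hxy, rfl⟩)
    · exact mem_insert_of_mem _ (heq ▸ mem_insert _ _)
  · exact mem_insert _ _

lemma countable_setOf_rel_of_mem (hcount : ∀ y : Ω, {x | r x y}.Countable)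
    (h𝒞 : 𝒞 = {C | ∃ y : Ω, C = {x | r x y}} ∪ {univ})
    (hr₁_le_univ : ∀ D ∈ 𝒞, r₁ D univ → D = univ)
    (hr₁_seg : ∀ y x : Ω, r₁ {z | r z y} {z | r z x} → r y x ∨ {z | r z y} = {z | r z x})
    {C : Set Ω} (hC : C ∈ 𝒞) :
    {D ∈ 𝒞 | r₁ D C}.Countable := by
  rw [h𝒞] at hC
  rcases hC with ⟨y, rfl⟩ | rfl
  · exact (((hcount y).image _).insert _ |>.insert _).mono
      (setOf_rel_segment_subset h𝒞 hr₁_seg y)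
  · exact (countable_singleton univ).mono fun D ⟨hD, h⟩ => hr₁_le_univ D hD h

end ModifiedOrdering

theorem first_served_rule_countable_images_general
    {Ω : Type}
    (r : Ω → Ω → Prop)
    (hcount : ∀ y : Ω, {x | r x y}.Countable)
    (𝒞 : Set (Set Ω))
    (h𝒞 : 𝒞 = {C | ∃ y : Ω, C = {x | r x y}} ∪ {Set.univ})
    -- `r₁` is the modified ordering of `𝒞`: `univ` comes first, the segments keep
    -- the order induced by `r`.
    (r₁ : Set Ω → Set Ω → Prop)
    (hr₁_le_univ : ∀ D ∈ 𝒞, r₁ D Set.univ → D = Set.univ)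
    (hr₁_seg : ∀ y x : Ω, r₁ {z | r z y} {z | r z x} → r y x ∨ {z | r z y} = {z | r z x})
    -- `L₁` returns the `r₁`-least concept consistent with the labelled sample.
    (L₁ : (n : ℕ) → (Fin n → Ω) → (Fin n → Prop) → Set Ω)
    (hmem : ∀ (n : ℕ) (σ : Fin n → Ω), ∀ C ∈ 𝒞, L₁ n σ (fun i => σ i ∈ C) ∈ 𝒞)
    (hmin : ∀ (n : ℕ) (σ : Fin n → Ω), ∀ C ∈ 𝒞, ∀ D ∈ 𝒞,
      (∀ i, σ i ∈ D ↔ σ i ∈ C) →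
        L₁ n σ (fun i => σ i ∈ C) = D ∨ r₁ (L₁ n σ (fun i => σ i ∈ C)) D) :
    ∀ C ∈ 𝒞,
      {D : Set Ω | ∃ (n : ℕ) (σ : Fin n → Ω), D = L₁ n σ fun i => σ i ∈ C}.Countable := by
  intro C hC
  refine ((countable_setOf_rel_of_mem hcount h𝒞 hr₁_le_univ hr₁_seg hC).insert C).mono ?_
  rintro _ ⟨n, σ, rfl⟩
  rcases hmin n σ C hC C hC fun _ => Iff.rfl with h | h
  · exact mem_insert_iff.mpr (Or.inl h)
  · exact mem_insert_of_mem _ ⟨hmem n σ C hC, h⟩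

/-- under CH, for the class `𝒞` of initial segments of a well-ordering
`r` of a standard Borel space with countable proper initial segments, together with
the whole space, the "first in, first served" rule `L₁` (returning the least
consistent concept with respect to an ordering `r₁` of `𝒞` placing `univ` first and
the segments in `r`-order) has countable image class `ℒ₁^C` for every `C ∈ 𝒞`. -/
theorem first_served_rule_countable_images
    {Ω : Type} [MeasurableSpace Ω] [StandardBorelSpace Ω]
    (hCH : Cardinal.continuum = Cardinal.aleph 1)
    (r : Ω → Ω → Prop) (hwo : IsWellOrder Ω r)
    (hcount : ∀ y : Ω, {x | r x y}.Countable)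
    (𝒞 : Set (Set Ω))
    (h𝒞 : 𝒞 = {C | ∃ y : Ω, C = {x | r x y}} ∪ {Set.univ})
    -- `r₁` is the modified ordering of `𝒞`: `univ` comes first, the segments keep
    -- the order induced by `r`.
    (r₁ : Set Ω → Set Ω → Prop)
    (hr₁_univ_least : ∀ C ∈ 𝒞, C ≠ Set.univ → r₁ Set.univ C)
    (hr₁_le_univ : ∀ D ∈ 𝒞, r₁ D Set.univ → D = Set.univ)
    (hr₁_seg : ∀ y x : Ω, r₁ {z | r z y} {z | r z x} → r y x ∨ {z | r z y} = {z | r z x})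
    -- `L₁` returns the `r₁`-least concept consistent with the labelled sample.
    (L₁ : (n : ℕ) → (Fin n → Ω) → (Fin n → Prop) → Set Ω)
    (hmem : ∀ (n : ℕ) (σ : Fin n → Ω), ∀ C ∈ 𝒞, L₁ n σ (fun i => σ i ∈ C) ∈ 𝒞)
    (hcons : ∀ (n : ℕ) (σ : Fin n → Ω), ∀ C ∈ 𝒞,
      ∀ i, σ i ∈ L₁ n σ (fun j => σ j ∈ C) ↔ σ i ∈ C)
    (hmin : ∀ (n : ℕ) (σ : Fin n → Ω), ∀ C ∈ 𝒞, ∀ D ∈ 𝒞,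
      (∀ i, σ i ∈ D ↔ σ i ∈ C) →
        L₁ n σ (fun i => σ i ∈ C) = D ∨ r₁ (L₁ n σ (fun i => σ i ∈ C)) D) :
    ∀ C ∈ 𝒞,
      {D : Set Ω | ∃ (n : ℕ) (σ : Fin n → Ω), D = L₁ n σ fun i => σ i ∈ C}.Countable :=
  first_served_rule_countable_images_general r hcount 𝒞 h𝒞 r₁ hr₁_le_univ hr₁_seg L₁ hmem hmin
end

section
/- If a concept class 𝒞 of universally measurable subsets of a domain Ω is distribution-free PAC learnable, then 𝒞 has finite VC dimension. -/
open MeasureTheory Set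

def Shatters {Ω : Type*} (𝒞 : Set (Set Ω)) (F : Finset Ω) : Prop :=
  ∀ T ⊆ F, ∃ C ∈ 𝒞, C ∩ (F : Set Ω) = (T : Set Ω)

/-!
Let `N` be the sample size that the PAC guarantee provides for `ε = 1/4` and `δ = 1/16`, and
suppose `F` is shattered with `|F| > 4N`. Take `μ` uniform on `F` and targets realising every
labelling `T` of `F`. If a sample misses a point `x`, flipping the label of `x` in `T` leaves the
learner's output unchanged but changes the truth at `x`, so exactly half of the labellings are
misclassified at `x`. Averaging over samples and labellings, some target has expected error at
least `(|F| - N) / (2|F|) ≥ 3/8`; as the error is at most `1`, it exceeds `1/4` with probability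
at least `1/8 > 1/16`.
-/

open Finset ProbabilityTheory
open scoped ENNReal

theorem Finset.sum_le_card_filter_lt_mul_add {α : Type*} {s : Finset α} {f : α → ℕ} {b c : ℕ}
    (hf : ∀ a ∈ s, f a ≤ b) : ∑ a ∈ s, f a ≤ #{a ∈ s | c < f a} * b + #s * c := by
  calc ∑ a ∈ s, f a ≤ ∑ a ∈ s, if c < f a then b else c :=
        sum_le_sum fun a ha => by split_ifs with hc <;> [exact hf a ha; exact not_lt.1 hc]
    _ ≤ #{a ∈ s | c < f a} * b + #s * c := by
      rw [sum_ite, sum_const, sum_const, smul_eq_mul, smul_eq_mul]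
      gcongr
      exact filter_subset _ _

section Mistakes

variable {ι : Type*} [Fintype ι] {N : ℕ}

open scoped Classical in
noncomputable def mistakes (h : (Fin N → ι) → (Fin N → Prop) → Set ι) (T : Finset ι)
    (v : Fin N → ι) : Finset ι :=
  {x | ¬(x ∈ h v (fun i => v i ∈ T) ↔ x ∈ T)}

variable {h : (Fin N → ι) → (Fin N → Prop) → Set ι}

theorem mem_mistakes {T : Finset ι} {v : Fin N → ι} {x : ι} :
    x ∈ mistakes h T v ↔ ¬(x ∈ h v (fun i => v i ∈ T) ↔ x ∈ T) := by
  simp [mistakes]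

variable [DecidableEq ι]

theorem mem_mistakes_symmDiff_singleton {T : Finset ι} {v : Fin N → ι} {x : ι}
    (hx : x ∉ Set.range v) :
    x ∈ mistakes h (symmDiff T {x}) v ↔ x ∉ mistakes h T v := by
  have hlabels : (fun i => v i ∈ symmDiff T {x}) = fun i => v i ∈ T := by
    ext i
    have : v i ≠ x := fun hi => hx ⟨i, hi⟩
    simp [Finset.mem_symmDiff, this]
  rw [mem_mistakes, mem_mistakes, hlabels, Finset.mem_symmDiff, Finset.mem_singleton]
  tauto

theorem two_mul_card_filter_mem_mistakes {v : Fin N → ι} {x : ι} (hx : x ∉ Set.range v) :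
    2 * #{T | x ∈ mistakes h T v} = 2 ^ Fintype.card ι := by
  have hflip : #{T | x ∈ mistakes h T v} = #{T | x ∉ mistakes h T v} := by
    refine card_nbij' (symmDiff · {x}) (symmDiff · {x}) ?_ ?_ ?_ ?_ <;>
      intro T <;> simp [mem_mistakes_symmDiff_singleton hx, symmDiff_symmDiff_cancel_right]
  rw [two_mul]
  nth_rw 2 [hflip]
  rw [card_filter_add_card_filter_not, card_univ, Fintype.card_finset]

theorem sub_mul_le_two_mul_sum_card_mistakes (v : Fin N → ι) :
    (Fintype.card ι - N) * 2 ^ Fintype.card ι ≤ 2 * ∑ T, #(mistakes h T v) := by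
  set unseen := (Finset.univ.image v)ᶜ
  have hunseen : Fintype.card ι - N ≤ #unseen := by
    rw [card_compl]
    exact Nat.sub_le_sub_left ((card_image_le).trans (by simp)) _
  calc (Fintype.card ι - N) * 2 ^ Fintype.card ι
      ≤ #unseen * 2 ^ Fintype.card ι := by gcongr
    _ = ∑ x ∈ unseen, 2 * #{T | x ∈ mistakes h T v} := by
      rw [sum_congr rfl fun x hx => two_mul_card_filter_mem_mistakes ?_, sum_const, smul_eq_mul]
      simpa [unseen] using hx
    _ = 2 * ∑ T, #(unseen ∩ mistakes h T v) := by
      simp_rw [← mul_sum, ← filter_mem_eq_inter, card_eq_sum_ones, sum_filter]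
      rw [sum_comm]
    _ ≤ 2 * ∑ T, #(mistakes h T v) := by
      gcongr
      exact inter_subset_right

theorem exists_pow_mul_sub_le_two_mul_sum_card_mistakes
    (h : (Fin N → ι) → (Fin N → Prop) → Set ι) :
    ∃ T, Fintype.card ι ^ N * (Fintype.card ι - N) ≤ 2 * ∑ v, #(mistakes h T v) := by
  obtain ⟨T, -, hT⟩ := exists_le_of_sum_le (s := univ)
    (f := fun _ => Fintype.card ι ^ N * (Fintype.card ι - N))
    (g := fun T => 2 * ∑ v, #(mistakes h T v)) univ_nonempty <| by
    calc ∑ _T : Finset ι, Fintype.card ι ^ N * (Fintype.card ι - N)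
        = ∑ _v : Fin N → ι, (Fintype.card ι - N) * 2 ^ Fintype.card ι := by
          simp [Fintype.card_finset]
          ring
      _ ≤ ∑ v, 2 * ∑ T, #(mistakes h T v) :=
          sum_le_sum fun v _ => sub_mul_le_two_mul_sum_card_mistakes v
      _ = ∑ T, 2 * ∑ v, #(mistakes h T v) := by simp_rw [← mul_sum]; rw [sum_comm]
  exact ⟨T, hT⟩

theorem exists_pow_le_eight_mul_card_filter_lt_card_mistakes
    (h : (Fin N → ι) → (Fin N → Prop) → Set ι) (hN : 4 * N < Fintype.card ι) :
    ∃ T, Fintype.card ι ^ N ≤ 8 * #{v | Fintype.card ι < 4 * #(mistakes h T v)} := by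
  obtain ⟨T, hT⟩ := exists_pow_mul_sub_le_two_mul_sum_card_mistakes h
  refine ⟨T, ?_⟩
  set m := Fintype.card ι
  have hmarkov := sum_le_card_filter_lt_mul_add (s := univ) (f := fun v => 4 * #(mistakes h T v))
    (b := 4 * m) (c := m) fun v _ => Nat.mul_le_mul_left 4 (card_le_univ _)
  rw [← mul_sum, card_univ, Fintype.card_fun, Fintype.card_fin] at hmarkov
  have hsub : 3 * (m ^ N * m) ≤ 4 * (m ^ N * (m - N)) := by
    calc 3 * (m ^ N * m) = m ^ N * (3 * m) := by ring
      _ ≤ m ^ N * (4 * (m - N)) := Nat.mul_le_mul_left _ (by omega)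
      _ = 4 * (m ^ N * (m - N)) := by ring
  have : m ^ N * m ≤ 8 * #{v | m < 4 * #(mistakes h T v)} * m := by linarith
  exact Nat.le_of_mul_le_mul_right this (by omega)

end Mistakes

section UniformSample

variable {ι Ω : Type*} [Fintype ι] [MeasurableSpace ι] [MeasurableSingletonClass ι]
  [MeasurableSpace Ω]

open scoped Classical in
theorem card_filter_div_le_map_uniformOn_univ (e : ι → Ω) (A : Set Ω) :
    (#{x | e x ∈ A} : ℝ≥0∞) / Fintype.card ι ≤ (uniformOn univ).map e A := by
  calc (#{x | e x ∈ A} : ℝ≥0∞) / Fintype.card ι = uniformOn univ (e ⁻¹' A) := by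
        rw [uniformOn_univ, ← Measure.count_apply_finset, coe_filter]
        simp [Set.preimage]
    _ ≤ (uniformOn univ).map e A := Measure.le_map_apply (measurable_of_countable e).aemeasurable A

theorem pi_map_uniformOn_univ {κ : Type*} [Fintype κ] (e : ι → Ω) :
    Measure.pi (fun _ : κ => (uniformOn univ).map e) =
      (uniformOn univ).map (fun (v : κ → ι) k => e (v k)) := by
  rw [← Measure.pi_map_pi fun _ => (measurable_of_countable e).aemeasurable, ← uniformOn_pi,
    Set.pi_univ]

theorem exists_inv_eight_le_pi_error_gt_quarter {N : ℕ} (hN : 4 * N < Fintype.card ι)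
    (A : (Fin N → Ω) → (Fin N → Prop) → Set Ω) (e : ι → Ω) (C : Finset ι → Set Ω)
    (hC : ∀ T, e ⁻¹' C T = T) :
    ∃ T, (8 : ℝ≥0∞)⁻¹ ≤ Measure.pi (fun _ : Fin N => (uniformOn univ).map e)
      {σ | 1 / 4 < ((uniformOn univ).map e (symmDiff (A σ fun i => σ i ∈ C T) (C T))).toReal} := by
  classical
  set h : (Fin N → ι) → (Fin N → Prop) → Set ι := fun v ℓ => e ⁻¹' A (fun i => e (v i)) ℓ
  obtain ⟨T, hT⟩ := exists_pow_le_eight_mul_card_filter_lt_card_mistakes h hN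
  refine ⟨T, ?_⟩
  have hm : 0 < Fintype.card ι := (Nat.zero_le _).trans_lt hN
  have hCT (x : ι) : e x ∈ C T ↔ x ∈ T := by rw [← Set.mem_preimage, hC, mem_coe]
  set error : (Fin N → Ω) → Set Ω := fun σ => symmDiff (A σ fun i => σ i ∈ C T) (C T)
  have hmistakes (v : Fin N → ι) :
      ({x | e x ∈ error fun i => e (v i)} : Finset ι) = mistakes h T v := by
    ext x
    simp only [mem_filter, Finset.mem_univ, true_and, mem_mistakes, error, h, hCT,
      Set.mem_preimage, Set.mem_symmDiff]
    tauto
  have hbad (v : Fin N → ι) (hv : Fintype.card ι < 4 * #(mistakes h T v)) :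
      1 / 4 < ((uniformOn univ).map e (error fun i => e (v i))).toReal := by
    have hle := card_filter_div_le_map_uniformOn_univ e (error fun i => e (v i))
    rw [hmistakes] at hle
    calc (1 / 4 : ℝ) < #(mistakes h T v) / Fintype.card ι := by
          rw [lt_div_iff₀ (by exact_mod_cast hm)]
          have : (Fintype.card ι : ℝ) < 4 * #(mistakes h T v) := by exact_mod_cast hv
          linarith
      _ ≤ ((uniformOn univ).map e (error fun i => e (v i))).toReal := by
          simpa [ENNReal.toReal_div] using ENNReal.toReal_mono (measure_ne_top _ _) hle
  calc (8 : ℝ≥0∞)⁻¹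
      ≤ (#{v | Fintype.card ι < 4 * #(mistakes h T v)} : ℝ≥0∞) / (Fintype.card ι ^ N : ℕ) := by
        rw [ENNReal.le_div_iff_mul_le (by simp [hm.ne']) (by simp), ← ENNReal.div_eq_inv_mul,
          ENNReal.div_le_iff (by simp) (by simp), mul_comm]
        exact_mod_cast hT
    _ ≤ (#{v | (fun i => e (v i)) ∈ {σ | 1 / 4 < ((uniformOn univ).map e (error σ)).toReal}} :
          ℝ≥0∞) / Fintype.card (Fin N → ι) := by
        rw [Fintype.card_fun, Fintype.card_fin]
        gcongr with v
        exact hbad v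
    _ ≤ _ := card_filter_div_le_map_uniformOn_univ _ _
    _ = _ := by rw [pi_map_uniformOn_univ]

end UniformSample

theorem Shatters.exists_preimage_eq {ι Ω : Type*} {𝒞 : Set (Set Ω)} {F : Finset Ω}
    (hF : Shatters 𝒞 F) {e : ι → Ω} (he : Function.Injective e) (heF : ∀ x, e x ∈ F)
    (T : Finset ι) : ∃ C ∈ 𝒞, e ⁻¹' C = T := by
  classical
  obtain ⟨C, hC𝒞, hCF⟩ := hF (T.image e) (image_subset_iff.2 fun x _ => heF x)
  refine ⟨C, hC𝒞, Set.ext fun x => ?_⟩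
  simpa [heF, he.eq_iff] using congrArg (e x ∈ ·) hCF

theorem finite_vc_of_pac_learnable_general {Ω : Type*} [MeasurableSpace Ω]
    (𝒞 : Set (Set Ω))
    (L : (n : ℕ) → (Fin n → Ω) → (Fin n → Prop) → Set Ω)
    (hPAC : ∀ ε : ℝ, 0 < ε → ∀ δ : ℝ, 0 < δ → ∃ N : ℕ, ∀ n : ℕ, N ≤ n →
      ∀ μ : Measure Ω, IsProbabilityMeasure μ → ∀ C ∈ 𝒞,
        (Measure.pi fun _ : Fin n => μ)
          {σ : Fin n → Ω | ε < (μ (symmDiff (L n σ fun i => σ i ∈ C) C)).toReal} ≤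
          ENNReal.ofReal δ) :
    ∃ d : ℕ, ∀ F : Finset Ω, Shatters 𝒞 F → F.card ≤ d := by
  obtain ⟨N, hN⟩ := hPAC (1 / 4) (by norm_num) (1 / 16) (by norm_num)
  refine ⟨4 * N, fun F hF => ?_⟩
  by_contra! hF_card
  have hF_nonempty : Nonempty (Fin F.card) := ⟨⟨0, by omega⟩⟩
  set e : Fin F.card → Ω := fun i => F.equivFin.symm i
  choose C hC𝒞 hCe using hF.exists_preimage_eq (e := e)
    (Subtype.val_injective.comp F.equivFin.symm.injective) fun i => (F.equivFin.symm i).2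
  obtain ⟨T, hT⟩ := exists_inv_eight_le_pi_error_gt_quarter (by simpa using hF_card) (L N) e C hCe
  have := hT.trans <| hN N le_rfl _
    (Measure.isProbabilityMeasure_map (measurable_of_countable e).aemeasurable) (C T) (hC𝒞 T)
  rw [one_div, ENNReal.ofReal_inv_of_pos (by norm_num), ENNReal.inv_le_inv] at this
  norm_num at this

/-- Blumer–Ehrenfeucht–Haussler–Warmuth lower bound: a class of
universally measurable sets that is distribution-free PAC learnable has finite
VC dimension. -/
theorem finite_vc_of_pac_learnable {Ω : Type*} [MeasurableSpace Ω]
    (𝒞 : Set (Set Ω))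
    (hum : ∀ C ∈ 𝒞, ∀ μ : Measure Ω, IsProbabilityMeasure μ → NullMeasurableSet C μ)
    (L : (n : ℕ) → (Fin n → Ω) → (Fin n → Prop) → Set Ω)
    (hrange : ∀ (n : ℕ) (σ : Fin n → Ω), ∀ C ∈ 𝒞, L n σ (fun i => σ i ∈ C) ∈ 𝒞)
    (hPAC : ∀ ε : ℝ, 0 < ε → ∀ δ : ℝ, 0 < δ → ∃ N : ℕ, ∀ n : ℕ, N ≤ n →
      ∀ μ : Measure Ω, IsProbabilityMeasure μ → ∀ C ∈ 𝒞,
        (Measure.pi fun _ : Fin n => μ)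
          {σ : Fin n → Ω | ε < (μ (symmDiff (L n σ fun i => σ i ∈ C) C)).toReal} ≤
          ENNReal.ofReal δ) :
    ∃ d : ℕ, ∀ F : Finset Ω, Shatters 𝒞 F → F.card ≤ d :=
  finite_vc_of_pac_learnable_general 𝒞 L hPAC
end
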